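/- For every complex number k with Re(k) > 0, the improper integral ∫_0^∞ y^k / sinh(y) dy converges and equals (2 − 2^(-k)) · Γ(1+k) · ζ(1+k). -/
import Mathlib

open MeasureTheory Set

set_option maxHeartbeats 2000000 in
/-- For complex `k` with `Re k > 0`, the improper integral `∫_0^∞ y^k / sinh y dy`
converges and equals `(2 − 2^(-k)) Γ(1+k) ζ(1+k)`. -/
theorem integral_cpow_div_sinh (k : ℂ) (hk : 0 < k.re) :
    IntegrableOn (fun y : ℝ => (y : ℂ) ^ k / (Real.sinh y : ℂ)) (Ioi 0) ∧
    ∫ y in Ioi (0 : ℝ), (y : ℂ) ^ k / (Real.sinh y : ℂ)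
      = (2 - (2 : ℂ) ^ (-k)) * Complex.Gamma (1 + k) * riemannZeta (1 + k) := by
  set s : ℂ := 1 + k with hs_def
  have hs1 : 1 < s.re := by
    simp only [hs_def, Complex.add_re, Complex.one_re]; linarith
  have hs0 : 0 < s.re := by linarith
  have hsk : s - 1 = k := by ring
  set F : ℝ → ℂ := fun t => 1 / (Real.sinh t : ℂ) with hF_def
  -- integrability
  have hint : IntegrableOn (fun y : ℝ => (y : ℂ) ^ k / (Real.sinh y : ℂ)) (Ioi 0) := by
    have hmc : MellinConvergent F s := by
      apply mellinConvergent_of_isBigO_rpow (a := s.re + 1) (b := 1)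
      · apply ContinuousOn.locallyIntegrableOn _ measurableSet_Ioi
        apply ContinuousOn.div continuousOn_const
        · exact (Complex.continuous_ofReal.comp Real.continuous_sinh).continuousOn
        · intro t ht
          exact Complex.ofReal_ne_zero.mpr (Real.sinh_pos_iff.mpr ht).ne'
      · have h1 : F =O[Filter.atTop] fun t => Real.exp (-t) := by
          rw [Asymptotics.isBigO_iff]
          refine ⟨4, Filter.eventually_atTop.2 ⟨1, fun t ht => ?_⟩⟩
          have hsinh : Real.exp t / 4 ≤ Real.sinh t := by
            rw [Real.sinh_eq]
            have h2 : Real.exp (-t) ≤ Real.exp t / 2 := by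
              rw [Real.exp_neg, inv_le_iff_one_le_mul₀ (Real.exp_pos t), div_mul_eq_mul_div,
                le_div_iff₀ (by norm_num : (0:ℝ) < 2), one_mul, ← Real.exp_add]
              calc (2:ℝ) ≤ Real.exp 1 * Real.exp 1 := by
                    nlinarith [Real.add_one_le_exp 1]
                _ ≤ Real.exp (t + t) := by
                    rw [← Real.exp_add]; exact Real.exp_le_exp.2 (by linarith)
            linarith
          have hsp : 0 < Real.sinh t := Real.sinh_pos_iff.mpr (by linarith)
          simp only [hF_def, norm_div, norm_one, Complex.norm_real, Real.norm_eq_abs,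
            abs_of_pos hsp, Real.abs_exp]
          rw [one_div, inv_le_iff_one_le_mul₀ hsp]
          calc (1:ℝ) = 4 * Real.exp (-t) * (Real.exp t / 4) := by
                rw [Real.exp_neg]; field_simp
            _ ≤ 4 * Real.exp (-t) * Real.sinh t := by
                have : (0:ℝ) ≤ 4 * Real.exp (-t) := by positivity
                exact mul_le_mul_of_nonneg_left hsinh this
        have h2 : (fun t => Real.exp (-t)) =o[Filter.atTop]
            fun t : ℝ => t ^ (-(s.re + 1)) := by
          have h3 := (isLittleO_rpow_exp_atTop (s.re + 1)).inv_rev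
            (by
              filter_upwards [Filter.eventually_gt_atTop (0:ℝ)] with t ht h
              exact absurd h (Real.rpow_pos_of_pos ht _).ne')
          refine h3.congr' ?_ ?_
          · filter_upwards with t using by rw [Real.exp_neg]
          · filter_upwards [Filter.eventually_ge_atTop (0:ℝ)] with t ht
            rw [Real.rpow_neg ht]
        exact h1.trans h2.isBigO
      · linarith
      · rw [Asymptotics.isBigO_iff]
        refine ⟨1, Filter.eventually_of_mem self_mem_nhdsWithin fun t ht => ?_⟩
        have ht : (0:ℝ) < t := ht
        have hsp : 0 < Real.sinh t := Real.sinh_pos_iff.mpr ht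
        have hle : t ≤ Real.sinh t := (Real.self_lt_sinh_iff.mpr ht).le
        simp only [hF_def, norm_div, norm_one, Complex.norm_real, Real.norm_eq_abs,
          abs_of_pos hsp, one_mul, Real.rpow_neg_one, abs_of_pos (inv_pos.mpr ht)]
        rw [one_div]
        exact inv_anti₀ ht hle
      · exact hs1
    refine hmc.congr_fun (fun t ht => ?_) measurableSet_Ioi
    simp only [hF_def, smul_eq_mul, hsk, mul_one_div]
  refine ⟨hint, ?_⟩
  -- the series expansion of 1/sinh
  have hF : ∀ t ∈ Ioi (0:ℝ), HasSum
      (fun n : ℕ => (2:ℂ) * (Real.exp (-(2*(n:ℝ)+1) * t) : ℝ)) (F t) := by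
    intro t ht
    have ht : (0:ℝ) < t := ht
    have hlt : Real.exp (-(2*t)) < 1 := Real.exp_lt_one_iff.mpr (by linarith)
    have hgeo := (hasSum_geometric_of_lt_one (Real.exp_nonneg _) hlt).mul_left
      (2 * Real.exp (-t))
    have hsp : 0 < Real.sinh t := Real.sinh_pos_iff.mpr ht
    have hval : 2 * Real.exp (-t) * (1 - Real.exp (-(2*t)))⁻¹ = 1 / Real.sinh t := by
      have hE : Real.exp t ≠ 0 := (Real.exp_pos t).ne'
      have hE' : Real.exp (-t) ≠ 0 := (Real.exp_pos _).ne'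
      have hkey : 1 - Real.exp (-(2*t)) = Real.exp (-t) * (2 * Real.sinh t) := by
        rw [Real.sinh_eq, two_mul, neg_add, Real.exp_add, Real.exp_neg]
        field_simp
      rw [hkey, one_div]
      field_simp
    rw [hval] at hgeo
    have hterm : (fun n : ℕ => 2 * Real.exp (-(2*(n:ℝ)+1) * t))
        = fun n : ℕ => 2 * Real.exp (-t) * Real.exp (-(2*t)) ^ n := by
      funext n
      rw [← Real.exp_nat_mul, mul_assoc, ← Real.exp_add]
      congr 1
      ring
    have hreal : HasSum (fun n : ℕ => 2 * Real.exp (-(2*(n:ℝ)+1) * t)) (1 / Real.sinh t) := by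
      rw [hterm]; exact hgeo
    have h2 := Complex.hasSum_ofReal.mpr hreal
    simp only [Complex.ofReal_mul, Complex.ofReal_ofNat, Complex.ofReal_div,
      Complex.ofReal_one] at h2
    exact h2
  -- summability of coefficients
  have h_sum : Summable fun n : ℕ => ‖(2:ℂ)‖ / (2*(n:ℝ)+1) ^ s.re := by
    have hbase : Summable fun n : ℕ => ‖(2:ℂ)‖ / ((n:ℝ)+1) ^ s.re := by
      have := (Real.summable_one_div_nat_rpow.mpr hs1).comp_injective Nat.succ_injective
      refine (this.mul_left ‖(2:ℂ)‖).congr fun n => ?_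
      simp only [Function.comp_apply, Nat.succ_eq_add_one]
      push_cast
      rw [mul_one_div]
    refine hbase.of_nonneg_of_le (fun n => by positivity) fun n => ?_
    apply div_le_div_of_nonneg_left (by norm_num) (by positivity)
    apply Real.rpow_le_rpow (by positivity) (by linarith [Nat.cast_nonneg (α := ℝ) n]) hs0.le
  have hsum := hasSum_mellin (a := fun _ : ℕ => (2:ℂ)) (p := fun n : ℕ => 2*(n:ℝ)+1)
    (F := F) (fun n => Or.inr (by positivity)) hs0 hF h_sum
  -- odd zeta sum
  have hzsum : Summable fun n : ℕ => 1 / (n:ℂ) ^ s :=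
    Complex.summable_one_div_nat_cpow.mpr hs1
  have h2s : ((2:ℝ):ℂ) = (2:ℂ) := by norm_num
  have heven : ∀ n : ℕ, 1 / ((2*n : ℕ):ℂ) ^ s = (2:ℂ)^(-s) * (1 / (n:ℂ) ^ s) := by
    intro n
    rw [Nat.cast_mul, Complex.natCast_mul_natCast_cpow, Complex.cpow_neg, Nat.cast_ofNat,
      one_div, mul_inv, one_div]
  have h2inj : Function.Injective fun n : ℕ => 2*n := fun a b h => by
    simp only at h; omega
  have hoinj : Function.Injective fun n : ℕ => 2*n+1 := fun a b h => by
    simp only at h; omega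
  have hse : Summable fun n : ℕ => 1 / ((2*n : ℕ):ℂ) ^ s := by
    have := hzsum.comp_injective h2inj
    simpa [Function.comp_def] using this
  have hso : Summable fun n : ℕ => 1 / ((2*n+1 : ℕ):ℂ) ^ s := by
    have := hzsum.comp_injective hoinj
    simpa [Function.comp_def] using this
  have hzeta : riemannZeta s = ∑' n : ℕ, 1 / (n:ℂ) ^ s := zeta_eq_tsum_one_div_nat_cpow hs1
  have hteo := tsum_even_add_odd (f := fun n : ℕ => 1 / (n:ℂ) ^ s) hse hso
  have hev : ∑' n : ℕ, 1 / ((2*n : ℕ):ℂ) ^ s = (2:ℂ)^(-s) * riemannZeta s := by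
    rw [hzeta, ← tsum_mul_left]
    exact tsum_congr heven
  have hodd : ∑' n : ℕ, 1 / ((2*n+1 : ℕ):ℂ) ^ s = (1 - (2:ℂ)^(-s)) * riemannZeta s := by
    have := hteo
    rw [hev, ← hzeta] at this
    linear_combination this
  have hO : HasSum (fun n : ℕ => 1 / ((2*n+1 : ℕ):ℂ) ^ s)
      ((1 - (2:ℂ)^(-s)) * riemannZeta s) := hodd ▸ hso.hasSum
  have hO2 := hO.mul_left (Complex.Gamma s * 2)
  have hO2' : HasSum (fun n : ℕ => Complex.Gamma s * 2 / ((2*(n:ℝ)+1 : ℝ):ℂ) ^ s)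
      (Complex.Gamma s * 2 * ((1 - (2:ℂ)^(-s)) * riemannZeta s)) := by
    have hcast : ∀ n : ℕ, ((2*n+1 : ℕ):ℂ) = ((2*(n:ℝ)+1 : ℝ):ℂ) := by
      intro n; push_cast; ring
    refine hO2.congr_fun fun n => ?_
    rw [mul_one_div, hcast n]
  have hmellin : mellin F s = Complex.Gamma s * 2 * ((1 - (2:ℂ)^(-s)) * riemannZeta s) :=
    hsum.unique hO2'
  have hint_eq : ∫ y in Ioi (0:ℝ), (y : ℂ) ^ k / (Real.sinh y : ℂ) = mellin F s := by
    rw [mellin]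
    refine setIntegral_congr_fun measurableSet_Ioi fun t ht => ?_
    simp only [hF_def, smul_eq_mul, hsk, mul_one_div]
  rw [hint_eq, hmellin]
  have h2k : (2:ℂ)^(-s) = (2:ℂ)⁻¹ * (2:ℂ)^(-k) := by
    rw [hs_def, neg_add, Complex.cpow_add _ _ (by norm_num), Complex.cpow_neg_one]
  rw [h2k]
  ring
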